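/- In ZM(m,n,r), for divisors n₁ | n, the subgroup ⟨a^{m₁}, b^{n₁}⟩ with m₁ | gcd(m, r^{n₁}−1) has order mn/(m₁n₁). -/

import Mathlib

def ZMrels (m n : ℕ) (r : ℤ) : Set (FreeGroup Bool) :=
  {FreeGroup.of true ^ m, FreeGroup.of false ^ n,
   (FreeGroup.of false)⁻¹ * FreeGroup.of true * FreeGroup.of false * (FreeGroup.of true) ^ (-r)}

abbrev ZM (m n : ℕ) (r : ℤ) : Type := PresentedGroup (ZMrels m n r)

def ZMa (m n : ℕ) (r : ℤ) : ZM m n r := PresentedGroup.of true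

def ZMb (m n : ℕ) (r : ℤ) : ZM m n r := PresentedGroup.of false

/-!
Sending `a ↦ (1, 0)` and `b ↦ (0, 1)` embeds `ZM m n r` into `ℤ/m ⋊ ℤ/n`, where the generator
of `ℤ/n` acts by multiplication by `r⁻¹` (a unit mod `m`, as `r ^ n ≡ 1`): the relations of the
semidirect product hold in `ZM`, which gives a left inverse. Every endomorphism of the cyclic group
`ℤ/m` is a power map, so `m₁ℤ/m` is invariant under the action, and the subgroup generated by
`(m₁, 0)` and `(0, n₁)` is `m₁ℤ/m × n₁ℤ/n` as a set, of order `(m / m₁) * (n / n₁)`.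
-/

open Multiplicative Subgroup

section ZModHom

variable {G : Type*} [Group G] {N : ℕ}

noncomputable def zmodPowersHom (N : ℕ) (g : G) (hg : g ^ N = 1) : Multiplicative (ZMod N) →* G :=
  AddMonoidHom.toMultiplicativeLeft
    (ZMod.lift N ⟨(zpowersHom G g).toAdditiveRight, by simp [hg]⟩)

@[simp]
lemma zmodPowersHom_ofAdd_intCast (g : G) (hg : g ^ N = 1) (t : ℤ) :
    zmodPowersHom N g hg (ofAdd (t : ZMod N)) = g ^ t := by
  simp [zmodPowersHom, zpowersHom]

@[simp]
lemma zmodPowersHom_ofAdd_one (g : G) (hg : g ^ N = 1) :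
    zmodPowersHom N g hg (ofAdd 1) = g := by
  simpa using zmodPowersHom_ofAdd_intCast g hg 1

lemma MonoidHom.ext_zmod {F F' : Multiplicative (ZMod N) →* G}
    (h : F (ofAdd 1) = F' (ofAdd 1)) : F = F' := by
  refine MonoidHom.ext fun x => ?_
  obtain ⟨t, ht⟩ := ZMod.intCast_surjective (toAdd x)
  have hx : x = ofAdd (1 : ZMod N) ^ t := by
    rw [← ofAdd_zsmul, zsmul_one, ht, ofAdd_toAdd]
  rw [hx, map_zpow, map_zpow, h]

lemma ZMod.mem_powers_ofAdd_one [NeZero N] (x : Multiplicative (ZMod N)) :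
    x ∈ Submonoid.powers (ofAdd 1) :=
  ⟨(toAdd x).val, show _ ^ _ = x by
    rw [← ofAdd_nsmul, nsmul_one, ZMod.natCast_zmod_val, ofAdd_toAdd]⟩

end ZModHom

noncomputable def ZMod.unitsMulAut (M : ℕ) : (ZMod M)ˣ →* MulAut (Multiplicative (ZMod M)) where
  toFun c := AddEquiv.toMultiplicative (DistribMulAction.toAddAut (ZMod M)ˣ (ZMod M) c)
  map_one' := by ext; simp
  map_mul' c d := by ext; simp [mul_smul]

@[simp]
lemma ZMod.unitsMulAut_apply (M : ℕ) (c : (ZMod M)ˣ) (x : ZMod M) :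
    ZMod.unitsMulAut M c (ofAdd x) = ofAdd ((c : ZMod M) * x) := rfl

namespace SemidirectProduct

variable {N G H : Type*} [Group N] [Group G] [Group H] {φ : G →* MulAut N}

lemma lift_condition_of_mem_powers (fn : N →* H) (fg : G →* H) {g₀ : G}
    (hg₀ : ∀ g, g ∈ Submonoid.powers g₀)
    (h : fn.comp (φ g₀).toMonoidHom = (MulAut.conj (fg g₀)).toMonoidHom.comp fn) (g : G) :
    fn.comp (φ g).toMonoidHom = (MulAut.conj (fg g)).toMonoidHom.comp fn := by
  obtain ⟨k, rfl⟩ := hg₀ g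
  ext x
  induction k generalizing x with
  | zero => simp
  | succ k ih =>
    have h₀ := DFunLike.congr_fun h
    simp only [MonoidHom.comp_apply, MulEquiv.coe_toMonoidHom, MulAut.conj_apply] at ih h₀ ⊢
    rw [pow_succ', map_mul, MulAut.mul_apply, h₀, ih, map_mul]
    group

def prodSubgroup (A : Subgroup N) (B : Subgroup G) (hA : ∀ g, ∀ a ∈ A, φ g a ∈ A) :
    Subgroup (N ⋊[φ] G) where
  carrier := {x | x.left ∈ A ∧ x.right ∈ B}
  one_mem' := ⟨A.one_mem, B.one_mem⟩
  mul_mem' := fun ⟨hx₁, hx₂⟩ ⟨hy₁, hy₂⟩ => ⟨A.mul_mem hx₁ (hA _ _ hy₁), B.mul_mem hx₂ hy₂⟩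
  inv_mem' := fun ⟨hx₁, hx₂⟩ => ⟨hA _ _ (A.inv_mem hx₁), B.inv_mem hx₂⟩

lemma card_prodSubgroup (A : Subgroup N) (B : Subgroup G) (hA : ∀ g, ∀ a ∈ A, φ g a ∈ A) :
    Nat.card (prodSubgroup A B hA) = Nat.card A * Nat.card B := by
  rw [← Nat.card_prod]
  exact Nat.card_congr
    { toFun x := (⟨x.1.left, x.2.1⟩, ⟨x.1.right, x.2.2⟩)
      invFun p := ⟨⟨p.1, p.2⟩, p.1.2, p.2.2⟩
      left_inv _ := rfl
      right_inv _ := rfl }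

lemma zpowers_invariant {x : N} (hx : ∀ g, φ g x ∈ zpowers x) :
    ∀ g, ∀ a ∈ zpowers x, φ g a ∈ zpowers x := by
  rintro g _ ⟨k, rfl⟩
  simpa only [map_zpow] using zpow_mem (hx g) k

lemma closure_inl_inr {x : N} (y : G) (hx : ∀ g, φ g x ∈ zpowers x) :
    closure {inl (φ := φ) x, inr y} =
      prodSubgroup (zpowers x) (zpowers y) (zpowers_invariant hx) := by
  apply le_antisymm
  · rw [closure_le]
    rintro _ (rfl | rfl)
    · exact ⟨mem_zpowers x, one_mem _⟩
    · exact ⟨one_mem _, mem_zpowers y⟩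
  · rintro z ⟨⟨k, hk⟩, ⟨l, hl⟩⟩
    rw [← inl_left_mul_inr_right z, ← hk, ← hl, map_zpow, map_zpow]
    exact mul_mem (zpow_mem (subset_closure (by simp)) k) (zpow_mem (subset_closure (by simp)) l)

lemma card_closure_inl_inr {x : N} (y : G) (hx : ∀ g, φ g x ∈ zpowers x) :
    Nat.card (closure {inl (φ := φ) x, inr y}) = orderOf x * orderOf y := by
  rw [closure_inl_inr y hx, card_prodSubgroup, Nat.card_zpowers, Nat.card_zpowers]

end SemidirectProduct

lemma MonoidHom.apply_mem_zpowers_of_isCyclic {G : Type*} [Group G] [IsCyclic G] (σ : G →* G)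
    (x : G) : σ x ∈ zpowers x :=
  let ⟨k, hk⟩ := σ.map_cyclic
  ⟨k, (hk x).symm⟩

namespace ZM

open SemidirectProduct

variable (m n : ℕ) (r : ℤ)

lemma a_pow_eq_one : ZMa m n r ^ m = 1 := by
  have h := PresentedGroup.one_of_mem (rels := ZMrels m n r) (x := FreeGroup.of true ^ m)
    (by simp [ZMrels])
  rwa [map_pow] at h

lemma b_pow_eq_one : ZMb m n r ^ n = 1 := by
  have h := PresentedGroup.one_of_mem (rels := ZMrels m n r) (x := FreeGroup.of false ^ n)
    (by simp [ZMrels])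
  rwa [map_pow] at h

lemma b_inv_mul_a_mul_b : (ZMb m n r)⁻¹ * ZMa m n r * ZMb m n r = ZMa m n r ^ r := by
  have h := PresentedGroup.one_of_mem (rels := ZMrels m n r) (x := (FreeGroup.of false)⁻¹ *
    FreeGroup.of true * FreeGroup.of false * (FreeGroup.of true) ^ (-r)) (by simp [ZMrels])
  simp only [map_mul, map_inv, map_zpow, zpow_neg] at h
  exact mul_inv_eq_one.mp h

noncomputable def aHom : Multiplicative (ZMod m) →* ZM m n r :=
  zmodPowersHom m (ZMa m n r) (a_pow_eq_one m n r)

noncomputable def bHom : Multiplicative (ZMod n) →* ZM m n r :=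
  zmodPowersHom n (ZMb m n r) (b_pow_eq_one m n r)

variable {m n r}

lemma intCast_pow_eq_one (hr : (m : ℤ) ∣ r ^ n - 1) : (r : ZMod m) ^ n = 1 := by
  rw [← sub_eq_zero]
  exact_mod_cast (ZMod.intCast_zmod_eq_zero_iff_dvd _ m).mpr hr

section Model

variable (hn : 0 < n) (hr : (m : ℤ) ∣ r ^ n - 1)

noncomputable def unitR : (ZMod m)ˣ :=
  (IsUnit.of_pow_eq_one (intCast_pow_eq_one hr) hn.ne').unit

@[simp]
lemma coe_unitR : (unitR hn hr : ZMod m) = r :=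
  IsUnit.unit_spec _

lemma unitR_pow : unitR hn hr ^ n = 1 :=
  Units.ext <| by rw [Units.val_pow_eq_pow_val, coe_unitR, intCast_pow_eq_one hr, Units.val_one]

/-- The generator acts by `r⁻¹`, not `r`: in `N ⋊[φ] G` one has `inr g * inl x * inr g⁻¹ =
inl (φ g x)`, whereas the defining relation of `ZM` conjugates `a` by `b⁻¹`. -/
noncomputable def action : Multiplicative (ZMod n) →* MulAut (Multiplicative (ZMod m)) :=
  zmodPowersHom n (ZMod.unitsMulAut m (unitR hn hr)⁻¹) <| by
    rw [← map_pow, inv_pow, unitR_pow, inv_one, map_one]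

lemma action_ofAdd_one : action hn hr (ofAdd 1) = ZMod.unitsMulAut m (unitR hn hr)⁻¹ :=
  zmodPowersHom_ofAdd_one _ _

abbrev Model := Multiplicative (ZMod m) ⋊[action hn hr] Multiplicative (ZMod n)

noncomputable def toModel : ZM m n r →* Model hn hr :=
  PresentedGroup.toGroup (f := fun x => cond x (inl (ofAdd 1)) (inr (ofAdd 1))) <| by
    rintro _ (rfl | rfl | rfl) <;>
      simp only [map_pow, map_mul, map_inv, map_zpow, FreeGroup.lift_apply_of, cond_true,
        cond_false]
    · rw [← map_pow, ← ofAdd_nsmul, nsmul_one, ZMod.natCast_self, ofAdd_zero, map_one]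
    · rw [← map_pow, ← ofAdd_nsmul, nsmul_one, ZMod.natCast_self, ofAdd_zero, map_one]
    · rw [← map_inv, ← inl_aut_inv, action_ofAdd_one, ← map_inv, inv_inv, ZMod.unitsMulAut_apply,
        ← map_zpow, ← map_mul, ← ofAdd_zsmul, ← ofAdd_add, coe_unitR]
      simp

lemma toModel_a_pow (k : ℕ) : toModel hn hr (ZMa m n r ^ k) = inl (ofAdd (k : ZMod m)) := by
  rw [map_pow, ← nsmul_one, ofAdd_nsmul, map_pow]
  exact congrArg (· ^ k) (PresentedGroup.toGroup.of _)

lemma toModel_b_pow (k : ℕ) : toModel hn hr (ZMb m n r ^ k) = inr (ofAdd (k : ZMod n)) := by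
  rw [map_pow, ← nsmul_one, ofAdd_nsmul, map_pow]
  exact congrArg (· ^ k) (PresentedGroup.toGroup.of _)

lemma conj_b_inv_comp_aHom :
    (MulAut.conj (ZMb m n r)⁻¹).toMonoidHom.comp (aHom m n r) =
      (aHom m n r).comp (ZMod.unitsMulAut m (unitR hn hr)).toMonoidHom :=
  MonoidHom.ext_zmod <| by
    simp only [aHom, MonoidHom.comp_apply, MulEquiv.coe_toMonoidHom, MulAut.conj_apply, inv_inv,
      zmodPowersHom_ofAdd_one, b_inv_mul_a_mul_b, ZMod.unitsMulAut_apply, coe_unitR, mul_one,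
      zmodPowersHom_ofAdd_intCast]

lemma aHom_comp_action_ofAdd_one :
    (aHom m n r).comp (action hn hr (ofAdd 1)).toMonoidHom =
      (MulAut.conj (bHom m n r (ofAdd 1))).toMonoidHom.comp (aHom m n r) := by
  refine MonoidHom.ext fun x => ?_
  have h := DFunLike.congr_fun (conj_b_inv_comp_aHom hn hr) (ZMod.unitsMulAut m (unitR hn hr)⁻¹ x)
  simp only [MonoidHom.comp_apply, MulEquiv.coe_toMonoidHom, MulAut.conj_apply, inv_inv,
    ← MulAut.mul_apply, ← map_mul, mul_inv_cancel, map_one, MulAut.one_apply] at h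
  simp only [MonoidHom.comp_apply, MulEquiv.coe_toMonoidHom, MulAut.conj_apply, action_ofAdd_one,
    bHom, zmodPowersHom_ofAdd_one, ← h]
  group

noncomputable def ofModel : Model hn hr →* ZM m n r :=
  have := NeZero.of_pos hn
  lift (aHom m n r) (bHom m n r) <|
    lift_condition_of_mem_powers _ _ ZMod.mem_powers_ofAdd_one (aHom_comp_action_ofAdd_one hn hr)

lemma ofModel_comp_toModel : (ofModel hn hr).comp (toModel hn hr) = MonoidHom.id _ :=
  PresentedGroup.ext fun i => by cases i <;> simp [ofModel, toModel, aHom, bHom, ZMa, ZMb]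

lemma toModel_injective : Function.Injective (toModel hn hr) :=
  Function.LeftInverse.injective (g := ofModel hn hr) <|
    DFunLike.congr_fun (ofModel_comp_toModel hn hr)

end Model

lemma card_closure_a_pow_b_pow (hm : 0 < m) (hn : 0 < n) (hr : (m : ℤ) ∣ r ^ n - 1) {m₁ n₁ : ℕ}
    (hm₁ : m₁ ∣ m) (hn₁ : n₁ ∣ n) :
    Nat.card (closure {ZMa m n r ^ m₁, ZMb m n r ^ n₁}) = m / m₁ * (n / n₁) := by
  rw [← card_map_of_injective (toModel_injective hn hr), MonoidHom.map_closure, Set.image_pair,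
    toModel_a_pow, toModel_b_pow,
    card_closure_inl_inr _ fun g => (action hn hr g).toMonoidHom.apply_mem_zpowers_of_isCyclic _,
    orderOf_ofAdd_eq_addOrderOf, orderOf_ofAdd_eq_addOrderOf, ZMod.addOrderOf_coe _ hm.ne',
    ZMod.addOrderOf_coe _ hn.ne', Nat.gcd_eq_right hm₁, Nat.gcd_eq_right hn₁]

end ZM

theorem stmt17_general (m n : ℕ) (r : ℤ) (hm : 0 < m) (hn : 0 < n)
    (hr : (m : ℤ) ∣ r ^ n - 1)
    (m₁ n₁ : ℕ) (hn1 : n₁ ∣ n) (hg : m₁ ∣ Int.gcd (m : ℤ) (r ^ n₁ - 1)) :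
    Nat.card (Subgroup.closure {ZMa m n r ^ m₁, ZMb m n r ^ n₁} : Subgroup (ZM m n r))
      = m * n / (m₁ * n₁) := by
  have hm1 : m₁ ∣ m := hg.trans (Int.gcd_dvd_natAbs_left _ _)
  rw [ZM.card_closure_a_pow_b_pow hm hn hr hm1 hn1, Nat.div_mul_div_comm hm1 hn1]

theorem stmt17 (m n : ℕ) (r : ℤ) (hm : 0 < m) (hn : 0 < n)
    (hco : Nat.Coprime m n) (hco2 : IsCoprime (m : ℤ) (r - 1))
    (hr : (m : ℤ) ∣ r ^ n - 1)
    (m₁ n₁ : ℕ) (hn1 : n₁ ∣ n) (hg : m₁ ∣ Int.gcd (m : ℤ) (r ^ n₁ - 1)) :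
    Nat.card (Subgroup.closure {ZMa m n r ^ m₁, ZMb m n r ^ n₁} : Subgroup (ZM m n r))
      = m * n / (m₁ * n₁) :=
  stmt17_general m n r hm hn hr m₁ n₁ hn1 hg
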